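/- arXiv:2506.23794 — 3 statements merged into one kernel-verified Lean document; each statement's English description precedes it below -/
import Mathlib

section
/- Let n be a positive integer and let P be a triangle-free graph on {1,...,n}. Define the graph B_2 whose vertices are the 2-element subsets of {1,...,n}, where distinct pairs e_1 and e_2 are adjacent if and only if |e_1 ∩ e_2| = 1 and the symmetric difference e_1 △ e_2 is an edge of P. Then B_2 is triangle-free: there are no three 2-element subsets e_1, e_2, e_3 that are pairwise adjacent in B_2. (Claim 4 in the proof of Theorem 1.) -/
/-- A graph on `{1,...,n}` is identified with a set of 2-element subsets of `Fin n`. -/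
def IsGraph {n : ℕ} (P : Finset (Finset (Fin n))) : Prop :=
  ∀ e ∈ P, e.card = 2

/-- A graph (given by its edge set) is triangle-free if no three pairwise adjacent vertices. -/
def TriangleFree {n : ℕ} (P : Finset (Finset (Fin n))) : Prop :=
  ¬ ∃ a b c : Fin n, a ≠ b ∧ a ≠ c ∧ b ≠ c ∧
      ({a, b} : Finset (Fin n)) ∈ P ∧ ({a, c} : Finset (Fin n)) ∈ P ∧
      ({b, c} : Finset (Fin n)) ∈ P

/-- Adjacency in the graph `B₂` on the 2-element subsets of `{1,...,n}`: distinct pairs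
`e₁, e₂` are adjacent iff `|e₁ ∩ e₂| = 1` and the symmetric difference `e₁ ∆ e₂` is an
edge of `P`. -/
def B2Adj {n : ℕ} (P : Finset (Finset (Fin n))) (e1 e2 : Finset (Fin n)) : Prop :=
  e1 ≠ e2 ∧ (e1 ∩ e2).card = 1 ∧ symmDiff e1 e2 ∈ P

/-!
The symmetric differences `e₁ ∆ e₂` and `e₁ ∆ e₃` of three pairwise adjacent vertices of `B₂`
are edges of `P`, and so is their symmetric difference `e₂ ∆ e₃`. Two 2-sets whose symmetric
difference is again a 2-set meet in exactly one point, so they have the shape `{a, b}`, `{a, c}`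
with symmetric difference `{b, c}`: the three edges form a triangle in `P`.
-/

open Finset
open scoped symmDiff

theorem Finset.exists_eq_pair_of_card_symmDiff_eq_two {α : Type*} [DecidableEq α]
    {s t : Finset α} (hs : #s = 2) (ht : #t = 2) (hst : #(s ∆ t) = 2) :
    ∃ a b c, a ≠ b ∧ a ≠ c ∧ b ≠ c ∧ s = {a, b} ∧ t = {a, c} ∧ s ∆ t = {b, c} := by
  have hsplit : #(s ∆ t) = #(s \ t) + #(t \ s) := card_union_of_disjoint disjoint_sdiff_sdiff
  rw [card_sdiff, card_sdiff, inter_comm t s, hs, ht, hst] at hsplit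
  obtain ⟨a, ha⟩ := card_eq_one.1 (show #(s ∩ t) = 1 by omega)
  obtain ⟨b, hb⟩ := card_eq_one.1 (show #(s \ t) = 1 by rw [card_sdiff, inter_comm t s]; omega)
  obtain ⟨c, hc⟩ := card_eq_one.1 (show #(t \ s) = 1 by rw [card_sdiff]; omega)
  have ha_mem : a ∈ s ∧ a ∈ t := mem_inter.1 (ha ▸ mem_singleton_self a)
  have hb_mem : b ∈ s ∧ b ∉ t := mem_sdiff.1 (hb ▸ mem_singleton_self b)
  have hc_mem : c ∈ t ∧ c ∉ s := mem_sdiff.1 (hc ▸ mem_singleton_self c)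
  refine ⟨a, b, c, ?_, ?_, ?_, ?_, ?_, ?_⟩
  · rintro rfl; exact hb_mem.2 ha_mem.2
  · rintro rfl; exact hc_mem.2 ha_mem.1
  · rintro rfl; exact hc_mem.2 hb_mem.1
  · rw [← sdiff_union_inter s t, ha, hb, union_comm, singleton_union]
  · rw [← sdiff_union_inter t s, inter_comm, ha, hc, union_comm, singleton_union]
  · rw [Finset.symmDiff_def, hb, hc, singleton_union]

theorem stmt5_general {n : ℕ} (P : Finset (Finset (Fin n)))
    (hP : IsGraph P) (hPtf : TriangleFree P) :
    ¬ ∃ e1 e2 e3 : Finset (Fin n), e1.card = 2 ∧ e2.card = 2 ∧ e3.card = 2 ∧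
      B2Adj P e1 e2 ∧ B2Adj P e1 e3 ∧ B2Adj P e2 e3 := by
  rintro ⟨e1, e2, e3, -, -, -, ⟨-, -, h12⟩, ⟨-, -, h13⟩, ⟨-, -, h23⟩⟩
  have h23 : (e1 ∆ e2) ∆ (e1 ∆ e3) ∈ P := by
    rwa [symmDiff_symmDiff_symmDiff_comm, symmDiff_self, bot_symmDiff]
  obtain ⟨a, b, c, hab, hac, hbc, hab_eq, hac_eq, hbc_eq⟩ :=
    exists_eq_pair_of_card_symmDiff_eq_two (hP _ h12) (hP _ h13) (hP _ h23)
  exact hPtf ⟨a, b, c, hab, hac, hbc, hab_eq ▸ h12, hac_eq ▸ h13, hbc_eq ▸ h23⟩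

/-- Claim 4: if `P` is triangle-free, then the graph `B₂` is triangle-free, i.e. there are
no three 2-element subsets `e₁, e₂, e₃` that are pairwise adjacent in `B₂`. -/
theorem stmt5 {n : ℕ} (hn : 0 < n) (P : Finset (Finset (Fin n)))
    (hP : IsGraph P) (hPtf : TriangleFree P) :
    ¬ ∃ e1 e2 e3 : Finset (Fin n), e1.card = 2 ∧ e2.card = 2 ∧ e3.card = 2 ∧
      B2Adj P e1 e2 ∧ B2Adj P e1 e3 ∧ B2Adj P e2 e3 :=
  stmt5_general P hP hPtf
end

section
/- The function ψ defined on [0,∞) by ψ(d) = (d·ln d − d + 1)/(d−1)² for d ∉ {0,1}, ψ(0) = 1, ψ(1) = 1/2, is continuous on [0,∞), takes values in (0,1], and is (weakly) decreasing on [0,∞); in particular (d·ln d − d + 1)/(d−1)² tends to 1/2 as d tends to 1. -/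
/-!
For `d ≥ 0` one has `ψ(d) = ∫₀¹ (1 - t) / (1 + t (d - 1)) dt`, as differentiating
`-t / c + (1 + c) / c² · log (1 + t c)` with `c = d - 1` shows. On `[0, 1]` the integrand lies in
`[0, 1]` and is decreasing in `d`, which gives the bounds and the monotonicity of `ψ`; continuity
follows by dominated convergence, and the limit at `1` is then `ψ(1) = 1/2`.
-/

/-- The function `ψ : [0,∞) → (0,1]` with `ψ(d) = (d·ln d − d + 1)/(d−1)²` for `d ∉ {0,1}`,
`ψ(0) = 1` and `ψ(1) = 1/2`. -/
noncomputable def psi (d : ℝ) : ℝ :=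
  if d = 0 then 1
  else if d = 1 then 1 / 2
  else (d * Real.log d - d + 1) / (d - 1) ^ 2

open Real Set Filter MeasureTheory Topology

theorem integral_one_sub_div_one_add_mul {c : ℝ} (hc : c ≠ 0) (hc₁ : -1 < c) :
    ∫ t in (0 : ℝ)..1, (1 - t) / (1 + t * c) = ((1 + c) * log (1 + c) - c) / c ^ 2 := by
  have hden : ∀ t ∈ uIcc (0 : ℝ) 1, 1 + t * c ≠ 0 := by
    intro t ht
    rw [uIcc_of_le zero_le_one] at ht
    rcases le_or_gt 0 c with hc₀ | hc₀
    · nlinarith [mul_nonneg ht.1 hc₀]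
    · nlinarith [mul_le_mul_of_nonpos_right ht.2 hc₀.le]
  have hderiv : ∀ t ∈ uIcc (0 : ℝ) 1,
      HasDerivAt (fun t => -t / c + (1 + c) / c ^ 2 * log (1 + t * c))
        ((1 - t) / (1 + t * c)) t := by
    intro t ht
    have hlin : HasDerivAt (fun t : ℝ => 1 + t * c) c t := by
      simpa using ((hasDerivAt_id t).mul_const c).const_add 1
    refine ((hasDerivAt_id t).neg.div_const c |>.add
      ((hlin.log (hden t ht)).const_mul _)).congr_deriv ?_
    have hne := hden t ht
    rw [eq_div_iff hne, add_mul, mul_assoc, div_mul_cancel₀ _ hne]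
    field_simp
    ring
  have hcont : ContinuousOn (fun t => (1 - t) / (1 + t * c)) (uIcc 0 1) :=
    ContinuousOn.div (by fun_prop) (by fun_prop) hden
  rw [intervalIntegral.integral_eq_sub_of_hasDerivAt hderiv hcont.intervalIntegrable]
  simp only [zero_mul, one_mul, add_zero, log_one, mul_zero]
  field_simp
  ring

noncomputable def psiKernel (d t : ℝ) : ℝ := (1 - t) / (1 + t * (d - 1))

section psiKernel

variable {d t : ℝ}

lemma one_add_mul_sub_one_pos (hd : 0 ≤ d) (ht₀ : 0 ≤ t) (ht₁ : t < 1) :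
    0 < 1 + t * (d - 1) := by
  nlinarith

lemma psiKernel_mem_Icc (hd : 0 ≤ d) (ht : t ∈ Icc (0 : ℝ) 1) :
    psiKernel d t ∈ Icc (0 : ℝ) 1 := by
  obtain ⟨ht₀, ht₁⟩ := ht
  rcases ht₁.eq_or_lt with rfl | ht₁
  · simp [psiKernel]
  have hden := one_add_mul_sub_one_pos hd ht₀ ht₁
  refine ⟨div_nonneg (by linarith) hden.le, ?_⟩
  rw [psiKernel, div_le_one hden]
  nlinarith

lemma psiKernel_antitoneOn (ht : t ∈ Icc (0 : ℝ) 1) :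
    AntitoneOn (fun d => psiKernel d t) (Ici 0) := by
  intro a ha b hb hab
  obtain ⟨ht₀, ht₁⟩ := ht
  rcases ht₁.eq_or_lt with rfl | ht₁
  · simp [psiKernel]
  refine div_le_div_of_nonneg_left (by linarith) (one_add_mul_sub_one_pos ha ht₀ ht₁) ?_
  nlinarith [mul_le_mul_of_nonneg_left hab ht₀]

lemma norm_psiKernel_le_one (hd : 0 ≤ d) (ht : t ∈ Icc (0 : ℝ) 1) :
    ‖psiKernel d t‖ ≤ 1 := by
  have h := psiKernel_mem_Icc hd ht
  rw [Real.norm_of_nonneg h.1]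
  exact h.2

lemma measurable_psiKernel (d : ℝ) : Measurable (psiKernel d) := by
  unfold psiKernel
  fun_prop

lemma intervalIntegrable_psiKernel (hd : 0 ≤ d) :
    IntervalIntegrable (psiKernel d) volume 0 1 := by
  refine (intervalIntegrable_const (c := (1 : ℝ))).mono_fun
    (measurable_psiKernel d).aestronglyMeasurable ?_
  rw [uIoc_of_le zero_le_one]
  exact (ae_restrict_iff' measurableSet_Ioc).mpr
    (ae_of_all _ fun t ht =>
      (norm_psiKernel_le_one hd (Ioc_subset_Icc_self ht)).trans_eq norm_one.symm)

lemma continuousAt_psiKernel (hd : 0 ≤ d) (ht₀ : 0 ≤ t) (ht₁ : t < 1) :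
    ContinuousAt (fun d => psiKernel d t) d :=
  continuousAt_const.div (by fun_prop) (one_add_mul_sub_one_pos hd ht₀ ht₁).ne'

end psiKernel

lemma psi_of_ne {d : ℝ} (h₀ : d ≠ 0) (h₁ : d ≠ 1) :
    psi d = (d * log d - d + 1) / (d - 1) ^ 2 := by
  simp [psi, h₀, h₁]

lemma psi_eq_integral_psiKernel {d : ℝ} (hd : 0 ≤ d) :
    psi d = ∫ t in (0 : ℝ)..1, psiKernel d t := by
  rcases hd.eq_or_lt with rfl | hd
  · -- `psiKernel 0 t = (1 - t) / (1 - t)` equals `1` except at `t = 1`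
    rw [intervalIntegral.integral_congr_ae (g := fun _ => 1) ?_]
    · simp [psi]
    filter_upwards [Measure.ae_ne volume 1] with t ht _
    rw [psiKernel, zero_sub, mul_neg_one, ← sub_eq_add_neg, div_self (sub_ne_zero.mpr ht.symm)]
  rcases eq_or_ne d 1 with rfl | hd₁
  · simp only [psiKernel, sub_self, mul_zero, add_zero, div_one]
    rw [intervalIntegral.integral_sub intervalIntegrable_const
      intervalIntegral.intervalIntegrable_id, integral_id]
    norm_num [psi]
  unfold psiKernel
  rw [psi_of_ne hd.ne' hd₁, integral_one_sub_div_one_add_mul (sub_ne_zero.mpr hd₁)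
    (by linarith), add_sub_cancel]
  ring_nf

lemma integral_psiKernel_mem_Ioc {d : ℝ} (hd : 0 ≤ d) :
    ∫ t in (0 : ℝ)..1, psiKernel d t ∈ Ioc (0 : ℝ) 1 := by
  constructor
  · refine intervalIntegral.intervalIntegral_pos_of_pos_on (intervalIntegrable_psiKernel hd)
      (fun t ht => ?_) one_pos
    exact div_pos (by linarith [ht.2]) (one_add_mul_sub_one_pos hd ht.1.le ht.2)
  · calc ∫ t in (0 : ℝ)..1, psiKernel d t ≤ ∫ _ in (0 : ℝ)..1, (1 : ℝ) :=
          intervalIntegral.integral_mono_on zero_le_one (intervalIntegrable_psiKernel hd)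
            intervalIntegrable_const fun t ht => (psiKernel_mem_Icc hd ht).2
      _ = 1 := by simp

lemma antitoneOn_integral_psiKernel :
    AntitoneOn (fun d => ∫ t in (0 : ℝ)..1, psiKernel d t) (Ici 0) :=
  fun _ ha _ hb hab => intervalIntegral.integral_mono_on zero_le_one
    (intervalIntegrable_psiKernel hb) (intervalIntegrable_psiKernel ha)
    fun _ ht => psiKernel_antitoneOn ht ha hb hab

lemma continuousOn_integral_psiKernel :
    ContinuousOn (fun d => ∫ t in (0 : ℝ)..1, psiKernel d t) (Ici 0) := by
  intro d₀ hd₀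
  refine intervalIntegral.continuousWithinAt_of_dominated_interval (bound := fun _ => 1)
    (Eventually.of_forall fun d => (measurable_psiKernel d).aestronglyMeasurable) ?_
    intervalIntegrable_const ?_
  · filter_upwards [self_mem_nhdsWithin] with d hd
    refine ae_of_all _ fun t ht => norm_psiKernel_le_one hd (Ioc_subset_Icc_self ?_)
    rwa [uIoc_of_le zero_le_one] at ht
  · filter_upwards [Measure.ae_ne volume 1] with t ht₁ ht
    rw [uIoc_of_le zero_le_one] at ht
    exact (continuousAt_psiKernel hd₀ ht.1.le (ht.2.lt_of_ne ht₁)).continuousWithinAt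

/-- `ψ` is continuous on `[0,∞)`, takes values in `(0,1]` there, and is weakly decreasing on
`[0,∞)`; in particular `(d·ln d − d + 1)/(d−1)²` tends to `1/2` as `d` tends to `1`. -/
theorem stmt11 :
    ContinuousOn psi (Set.Ici (0 : ℝ)) ∧
    (∀ d : ℝ, 0 ≤ d → psi d ∈ Set.Ioc (0 : ℝ) 1) ∧
    AntitoneOn psi (Set.Ici (0 : ℝ)) ∧
    Filter.Tendsto (fun d : ℝ => (d * Real.log d - d + 1) / (d - 1) ^ 2)
      (nhdsWithin 1 {(1 : ℝ)}ᶜ) (nhds (1 / 2)) := by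
  have hpsi : EqOn psi (fun d => ∫ t in (0 : ℝ)..1, psiKernel d t) (Ici 0) :=
    fun _ hd => psi_eq_integral_psiKernel hd
  have hcont : ContinuousOn psi (Ici 0) := continuousOn_integral_psiKernel.congr hpsi
  refine ⟨hcont, fun d hd => hpsi hd ▸ integral_psiKernel_mem_Ioc hd,
    antitoneOn_integral_psiKernel.congr hpsi.symm, ?_⟩
  have hlim : Tendsto psi (𝓝[≠] 1) (𝓝 (psi 1)) :=
    (hcont.continuousAt (Ici_mem_nhds one_pos)).continuousWithinAt.tendsto
  rw [show psi 1 = 1 / 2 by simp [psi]] at hlim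
  refine hlim.congr' ?_
  filter_upwards [nhdsWithin_le_nhds (Ioi_mem_nhds one_pos), self_mem_nhdsWithin] with d hd₀ hd₁
  exact psi_of_ne (ne_of_gt hd₀) hd₁
end

section
/- Let n be a positive integer and let P be a triangle-free graph on {1,...,n} with e(P) + N(S_2,P) < ⌊n²/4⌋. Let S be the edge set of a balanced complete bipartite graph on {1,...,n} (so |S| = ⌊n²/4⌋), let B_1 be the set of pairs of distinct vertices having a common neighbor in P, and let B_2 be the graph on the 2-element subsets of {1,...,n} in which distinct pairs e_1, e_2 are adjacent iff |e_1 ∩ e_2| = 1 and e_1 △ e_2 ∈ P. Set S' = S \ (P ∪ B_1). Then the average degree of the subgraph of B_2 induced on S' is at most γ(P)·d(P), where γ(P) = n(n−2)/(⌊n²/4⌋ − e(P) − N(S_2,P)) and d(P) = 2e(P)/n. -/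
/-- The degree of a vertex: number of edges containing it. -/
def degP {n : ℕ} (P : Finset (Finset (Fin n))) (v : Fin n) : ℕ :=
  (P.filter (fun e => v ∈ e)).card

/-- The number of two-edge stars `S₂` in `P`: `∑_v C(d_P(v), 2)`. -/
def numS2 {n : ℕ} (P : Finset (Finset (Fin n))) : ℕ :=
  ∑ v : Fin n, (degP P v).choose 2

/-- `B₁`: the set of pairs `{u,v}` of distinct vertices admitting a common neighbour in `P`. -/
def B1 {n : ℕ} (P : Finset (Finset (Fin n))) : Finset (Finset (Fin n)) :=
  ((Finset.univ : Finset (Fin n)).powersetCard 2).filter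
    (fun e => ∃ u v w : Fin n, u ≠ v ∧ e = {u, v} ∧ w ≠ u ∧ w ≠ v ∧
      ({w, u} : Finset (Fin n)) ∈ P ∧ ({w, v} : Finset (Fin n)) ∈ P)

/-- The edge set of the complete bipartite graph on `{1,...,n}` with parts `A` and `Aᶜ`. -/
def bipEdges {n : ℕ} (A : Finset (Fin n)) : Finset (Finset (Fin n)) :=
  ((Finset.univ : Finset (Fin n)).powersetCard 2).filter
    (fun e => ∃ u ∈ A, ∃ v ∈ Aᶜ, e = {u, v})

/-- `S' = S \ (P ∪ B₁)`, where `S` is the edge set of the complete bipartite graph with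
parts `A` and `Aᶜ`. -/
def Sprime {n : ℕ} (P : Finset (Finset (Fin n))) (A : Finset (Fin n)) :
    Finset (Finset (Fin n)) :=
  bipEdges A \ (P ∪ B1 P)

/-!
Every edge of `S` outside `P ∪ B₁` lies in `S'`, and every pair in `B₁` is the pair of leaves
of a two-edge star centred at a common neighbour, so `|S'| ≥ ⌊n²/4⌋ - e(P) - N(S₂,P)`.
An ordered `B₂`-adjacent pair `(e, f)` is determined by `p = e ∆ f ∈ P`, the vertex
`e \ f ∈ p` and the shared vertex `e ∩ f ∉ p`, so the degree sum over `S'` is at most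
`2(n-2)·e(P)`.
The quotient of the two bounds is `γ(P)·d(P)`.
-/

open Finset

lemma Nat.div_two_mul_sub_div_two (n : ℕ) : n / 2 * (n - n / 2) = n ^ 2 / 4 := by
  obtain ⟨k, rfl | rfl⟩ := Nat.even_or_odd' n
  · rw [show 2 * k / 2 = k by omega, show 2 * k - k = k by omega,
      show (2 * k) ^ 2 = 4 * (k * k) by ring, Nat.mul_div_cancel_left _ (by norm_num)]
  · rw [show (2 * k + 1) / 2 = k by omega, show 2 * k + 1 - k = k + 1 by omega,
      show (2 * k + 1) ^ 2 = 1 + 4 * (k * (k + 1)) by ring,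
      Nat.add_mul_div_left _ _ (by norm_num)]
    simp

section

variable {α : Type*} [Fintype α] [DecidableEq α] {S : Finset (Finset α)}

lemma card_filter_symmDiff_eq_le (hS : ∀ e ∈ S, e.card = 2) {p : Finset α}
    (hp : p.card = 2) :
    {q ∈ S ×ˢ S | (q.1 ∩ q.2).card = 1 ∧ symmDiff q.1 q.2 = p}.card
      ≤ 2 * (Fintype.card α - 2) := by
  have htarget :
      ((p.powersetCard 1) ×ˢ (pᶜ.powersetCard 1)).card = 2 * (Fintype.card α - 2) := by
    simp [card_powersetCard, hp, card_compl]
  rw [← htarget]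
  refine card_le_card_of_injOn (fun q => (q.1 \ q.2, q.1 ∩ q.2)) ?_ ?_
  · rintro ⟨e, f⟩ hq
    simp only [mem_coe, mem_filter, mem_product] at hq
    obtain ⟨⟨he, -⟩, hinter, rfl⟩ := hq
    have hdiff : (e \ f).card = 1 := by
      have := card_inter_add_card_sdiff e f
      have := hS e he
      omega
    refine mem_product.mpr ⟨mem_powersetCard.mpr ⟨fun x hx => ?_, hdiff⟩,
      mem_powersetCard.mpr ⟨fun x hx => ?_, hinter⟩⟩
    · exact mem_symmDiff.mpr (Or.inl (mem_sdiff.mp hx))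
    · simp_all
  · rintro ⟨e, f⟩ hq ⟨e', f'⟩ hq' heq
    obtain ⟨hdiff, hinter⟩ := Prod.mk.inj heq
    have he : e = e' := by
      rw [← sdiff_union_inter e f, ← sdiff_union_inter e' f', hdiff, hinter]
    have hp : symmDiff e f = symmDiff e' f' :=
      (mem_filter.mp hq).2.2.trans (mem_filter.mp hq').2.2.symm
    rw [he] at hp
    exact Prod.ext he (symmDiff_right_injective e' hp)

lemma sum_card_filter_symmDiff_mem_le {P : Finset (Finset α)} (hP : ∀ p ∈ P, p.card = 2)
    (hS : ∀ e ∈ S, e.card = 2) :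
    ∑ e ∈ S, {f ∈ S | f ≠ e ∧ (e ∩ f).card = 1 ∧ symmDiff e f ∈ P}.card
      ≤ P.card * (2 * (Fintype.card α - 2)) := by
  set T := {q ∈ S ×ˢ S | (q.1 ∩ q.2).card = 1 ∧ symmDiff q.1 q.2 ∈ P}
  have hT : ∀ q ∈ T, symmDiff q.1 q.2 ∈ P := fun q hq => (mem_filter.mp hq).2.2
  calc ∑ e ∈ S, {f ∈ S | f ≠ e ∧ (e ∩ f).card = 1 ∧ symmDiff e f ∈ P}.card
      ≤ ∑ e ∈ S, {f ∈ S | (e ∩ f).card = 1 ∧ symmDiff e f ∈ P}.card :=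
        sum_le_sum fun e _ => card_le_card (monotone_filter_right _ fun _ _ h => h.2)
    _ = T.card := by simp only [T, card_filter, sum_product]
    _ = ∑ p ∈ P, {q ∈ T | symmDiff q.1 q.2 = p}.card := card_eq_sum_card_fiberwise hT
    _ ≤ P.card * (2 * (Fintype.card α - 2)) := by
        refine sum_le_card_nsmul _ _ _ fun p hp => le_trans (card_le_card ?_)
          (card_filter_symmDiff_eq_le hS (hP p hp))
        intro q hq
        simp only [T, mem_filter] at hq ⊢
        exact ⟨hq.1.1, hq.1.2.1, hq.2⟩

end

section

variable {n : ℕ}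

lemma bipEdges_eq_image (A : Finset (Fin n)) :
    bipEdges A = (A ×ˢ Aᶜ).image (fun p => ({p.1, p.2} : Finset (Fin n))) := by
  ext e
  simp only [bipEdges, mem_filter, mem_powersetCard, mem_image, mem_product, Prod.exists]
  constructor
  · rintro ⟨_, u, hu, v, hv, rfl⟩
    exact ⟨u, v, ⟨hu, hv⟩, rfl⟩
  · rintro ⟨u, v, ⟨hu, hv⟩, rfl⟩
    have huv : u ≠ v := by rintro rfl; exact mem_compl.mp hv hu
    exact ⟨⟨subset_univ _, card_pair huv⟩, u, hu, v, hv, rfl⟩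

lemma card_bipEdges (A : Finset (Fin n)) : (bipEdges A).card = A.card * Aᶜ.card := by
  rw [bipEdges_eq_image, card_image_of_injOn, card_product]
  rintro ⟨u, v⟩ huv ⟨u', v'⟩ huv' h
  simp only [coe_product, Set.mem_prod, mem_coe, mem_compl] at huv huv'
  have h' := congrArg ((↑) : Finset (Fin n) → Set (Fin n)) h
  push_cast at h'
  rcases Set.pair_eq_pair_iff.mp h' with ⟨rfl, rfl⟩ | ⟨rfl, rfl⟩
  · rfl
  · exact absurd huv.1 huv'.2

lemma card_bipEdges_of_card_eq_half {A : Finset (Fin n)} (hA : A.card = n / 2) :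
    (bipEdges A).card = n ^ 2 / 4 := by
  rw [card_bipEdges, card_compl, Fintype.card_fin, hA, Nat.div_two_mul_sub_div_two]

def neighbors (P : Finset (Finset (Fin n))) (w : Fin n) : Finset (Fin n) :=
  {x | ({w, x} : Finset (Fin n)) ∈ P}

@[simp]
lemma mem_neighbors {P : Finset (Finset (Fin n))} {w x : Fin n} :
    x ∈ neighbors P w ↔ ({w, x} : Finset (Fin n)) ∈ P := by
  simp [neighbors]

lemma card_neighbors {P : Finset (Finset (Fin n))} (hP : IsGraph P) (w : Fin n) :
    (neighbors P w).card = degP P w := by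
  refine card_bij (fun x _ => ({w, x} : Finset (Fin n))) ?_ ?_ ?_
  · intro x hx
    exact mem_filter.mpr ⟨mem_neighbors.mp hx, mem_insert_self w _⟩
  · intro x hx y _ hxy
    have hxw : x ≠ w := by
      rintro rfl
      simpa using hP _ (mem_neighbors.mp hx)
    have hx : x ∈ ({w, y} : Finset (Fin n)) := hxy ▸ mem_insert_of_mem (mem_singleton_self x)
    simpa [hxw] using hx
  · intro e he
    obtain ⟨heP, hwe⟩ := mem_filter.mp he
    obtain ⟨a, b, -, rfl⟩ := card_eq_two.mp (hP _ heP)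
    rcases mem_insert.mp hwe with rfl | hw
    · exact ⟨b, by simpa using heP, rfl⟩
    · obtain rfl := mem_singleton.mp hw
      exact ⟨a, by simpa [pair_comm] using heP, pair_comm _ _⟩

lemma card_B1_le_numS2 {P : Finset (Finset (Fin n))} (hP : IsGraph P) :
    (B1 P).card ≤ numS2 P := by
  have hcover : B1 P ⊆
      univ.biUnion (fun w => (neighbors P w).powersetCard 2) := by
    intro e he
    simp only [B1, mem_filter, mem_powersetCard] at he
    obtain ⟨⟨_, hcard⟩, u, v, w, -, rfl, -, -, hu, hv⟩ := he
    refine mem_biUnion.mpr ⟨w, mem_univ _, mem_powersetCard.mpr ⟨?_, hcard⟩⟩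
    intro x hx
    rcases mem_insert.mp hx with rfl | hx
    · simpa using hu
    · simpa [mem_singleton.mp hx] using hv
  calc (B1 P).card
      ≤ (univ.biUnion (fun w => (neighbors P w).powersetCard 2)).card :=
        card_le_card hcover
    _ ≤ ∑ w, ((neighbors P w).powersetCard 2).card := card_biUnion_le
    _ = numS2 P := by simp only [card_powersetCard, card_neighbors hP, numS2]

lemma card_of_mem_Sprime {P : Finset (Finset (Fin n))} {A : Finset (Fin n)} {e : Finset (Fin n)}
    (he : e ∈ Sprime P A) : e.card = 2 :=
  (mem_powersetCard.mp (mem_filter.mp (mem_sdiff.mp he).1).1).2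

lemma card_bipEdges_le_card_Sprime_add {P : Finset (Finset (Fin n))} (hP : IsGraph P)
    (A : Finset (Fin n)) : (bipEdges A).card ≤ (Sprime P A).card + P.card + numS2 P := by
  have hcover : bipEdges A ⊆ Sprime P A ∪ (P ∪ B1 P) := by
    rw [Sprime, sdiff_union_self_eq_union]
    exact subset_union_left
  have := (card_le_card hcover).trans
    ((card_union_le _ _).trans (Nat.add_le_add_left (card_union_le P (B1 P)) _))
  have := card_B1_le_numS2 hP
  omega

end

theorem stmt12_general {n : ℕ} (P : Finset (Finset (Fin n)))
    (hP : IsGraph P)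
    (hsize : P.card + numS2 P < n ^ 2 / 4)
    (A : Finset (Fin n)) (hA : A.card = n / 2) :
    (∑ e ∈ Sprime P A,
        (((Sprime P A).filter
          (fun f => f ≠ e ∧ (e ∩ f).card = 1 ∧ symmDiff e f ∈ P)).card : ℝ)) /
        ((Sprime P A).card : ℝ)
      ≤ ((n : ℝ) * ((n : ℝ) - 2) /
            (((n ^ 2 / 4 : ℕ) : ℝ) - (P.card : ℝ) - (numS2 P : ℝ))) *
          (2 * (P.card : ℝ) / (n : ℝ)) := by
  have hn : 2 ≤ n := by
    by_contra! h
    interval_cases n <;> simp at hsize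
  have hdeg :=
    sum_card_filter_symmDiff_mem_le hP (S := Sprime P A) (fun _ => card_of_mem_Sprime)
  rw [Fintype.card_fin] at hdeg
  have hcard := card_bipEdges_of_card_eq_half hA ▸ card_bipEdges_le_card_Sprime_add hP A
  have hnum : (∑ e ∈ Sprime P A,
      (((Sprime P A).filter (fun f => f ≠ e ∧ (e ∩ f).card = 1 ∧ symmDiff e f ∈ P)).card : ℝ))
      ≤ 2 * ((n : ℝ) - 2) * P.card := by
    have := (Nat.cast_le (α := ℝ)).mpr hdeg
    push_cast [Nat.cast_sub hn] at this
    linarith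
  have hden : (0 : ℝ) < ((n ^ 2 / 4 : ℕ) : ℝ) - P.card - numS2 P := by
    rw [sub_sub, sub_pos]; exact_mod_cast hsize
  have hden' : ((n ^ 2 / 4 : ℕ) : ℝ) - P.card - numS2 P ≤ (Sprime P A).card := by
    rw [sub_sub, sub_le_iff_le_add]; exact_mod_cast (by omega : _)
  calc _ ≤ 2 * ((n : ℝ) - 2) * P.card / (((n ^ 2 / 4 : ℕ) : ℝ) - P.card - numS2 P) :=
        div_le_div₀ (le_trans (by positivity) hnum) hnum hden hden'
    _ = _ := by field_simp

/-- The average degree of the subgraph of `B₂` induced on `S'` is at most `γ(P)·d(P)`: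
here the degree of `e ∈ S'` in `B₂[S']` is the number of `f ∈ S'` with `|e ∩ f| = 1` and
`e ∆ f ∈ P`, the average degree is the sum of these degrees divided by `|S'|`,
`γ(P) = n(n−2)/(⌊n²/4⌋ − e(P) − N(S₂,P))` and `d(P) = 2e(P)/n`. -/
theorem stmt12 {n : ℕ} (hn : 0 < n) (P : Finset (Finset (Fin n)))
    (hP : IsGraph P) (hPtf : TriangleFree P)
    (hsize : P.card + numS2 P < n ^ 2 / 4)
    (A : Finset (Fin n)) (hA : A.card = n / 2) :
    (∑ e ∈ Sprime P A,
        (((Sprime P A).filter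
          (fun f => f ≠ e ∧ (e ∩ f).card = 1 ∧ symmDiff e f ∈ P)).card : ℝ)) /
        ((Sprime P A).card : ℝ)
      ≤ ((n : ℝ) * ((n : ℝ) - 2) /
            (((n ^ 2 / 4 : ℕ) : ℝ) - (P.card : ℝ) - (numS2 P : ℝ))) *
          (2 * (P.card : ℝ) / (n : ℝ)) :=
  stmt12_general P hP hsize A hA
end
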